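/- Let f : ℝⁿ → ℝ ∪ {∞}, x̄* ∈ ∂f(x̄), g : ℝⁿ → ℝ twice continuously differentiable, and h := f + g. Then the h-attentive limiting normal cone to gph ∂h at (x̄, x̄* + ∇g(x̄)) equals Ā^{−T} · N^f_{gph ∂f}(x̄, x̄*), where Ā = [[I, 0], [∇²g(x̄), I]] and Ā^{−T} is the inverse transpose of Ā. -/

import Mathlib

/-!
The map `(x, x*) ↦ (x, x* + ∇g x)` carries `gph ∂f` onto `gph ∂h` and preserves attentive
convergence, since `g` and `∇g` are continuous. Its derivative at `(x̄, x̄*)` is `Ā`, so it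
carries the f-attentive tangent cone into the h-attentive one by `Ā`, and hence the polar cones
by `Ā^{-T}`; continuity of `∇²g` lets this pass to the limiting normal cones. Replacing `(f, g)`
by `(h, -g)` gives the reverse inclusion.
-/

open scoped RealInnerProductSpace
open Filter Topology Metric Matrix

noncomputable section

abbrev En (n : ℕ) := EuclideanSpace ℝ (Fin n)

variable {n : ℕ}

/-- The regular (Fréchet) subdifferential of an extended-real-valued function. -/
def FSubdiff (f : En n → EReal) (x : En n) : Set (En n) :=
  {v | ∀ c : ℝ, 0 < c → ∃ δ > (0:ℝ), ∀ y ∈ ball x δ,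
    f x + ((⟪v, y - x⟫ - c * ‖y - x‖ : ℝ) : EReal) ≤ f y}

/-- The limiting (Mordukhovich) subdifferential, via f-attentive convergence. -/
def LSubdiff (f : En n → EReal) (x : En n) : Set (En n) :=
  {v | ∃ xs vs : ℕ → En n, (∀ k, vs k ∈ FSubdiff f (xs k)) ∧
    Tendsto xs atTop (𝓝 x) ∧ Tendsto (fun k => f (xs k)) atTop (𝓝 (f x)) ∧
    Tendsto vs atTop (𝓝 v)}

/-- The graph of the f-attentive ε-localization of the subdifferential around (x̄, x̄*). -/
def GphT (f : En n → EReal) (xb xbs : En n) (ε : ℝ) : Set (En n × En n) :=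
  {p | p.2 ∈ LSubdiff f p.1 ∧ f p.1 < f xb + (ε : EReal) ∧
       p.1 ∈ ball xb ε ∧ p.2 ∈ ball xbs ε}

/-- Prox-regularity of f at x̄ for x̄* with parameters r ≥ 0 and ε > 0. -/
def ProxReg (f : En n → EReal) (xb xbs : En n) (r ε : ℝ) : Prop :=
  (∃ a : ℝ, f xb = (a : EReal)) ∧ xbs ∈ LSubdiff f xb ∧ 0 ≤ r ∧ 0 < ε ∧
  ∀ x' ∈ ball xb ε, ∀ p ∈ GphT f xb xbs ε,
    f p.1 + ((⟪p.2, x' - p.1⟫ - r / 2 * ‖x' - p.1‖ ^ 2 : ℝ) : EReal) ≤ f x'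

/-- The f-attentive tangent cone to the graph of ∂f at (x, x*). -/
def AttTangent (f : En n → EReal) (x xstar : En n) : Set (En n × En n) :=
  {u | ∃ (t : ℕ → ℝ) (xs vs : ℕ → En n), (∀ k, 0 < t k) ∧ Tendsto t atTop (𝓝 0) ∧
    (∀ k, vs k ∈ LSubdiff f (xs k)) ∧ Tendsto xs atTop (𝓝 x) ∧
    Tendsto (fun k => f (xs k)) atTop (𝓝 (f x)) ∧ Tendsto vs atTop (𝓝 xstar) ∧
    Tendsto (fun k => (t k)⁻¹ • ((xs k, vs k) - (x, xstar))) atTop (𝓝 u)}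

/-- The f-attentive regular normal cone: the polar of the f-attentive tangent cone. -/
def AttRegNormal (f : En n → EReal) (x xstar : En n) : Set (En n × En n) :=
  {v | ∀ u ∈ AttTangent f x xstar, ⟪v.1, u.1⟫ + ⟪v.2, u.2⟫ ≤ 0}

/-- The f-attentive limiting normal cone to gph ∂f at (x, x*). -/
def AttLimNormal (f : En n → EReal) (x xstar : En n) : Set (En n × En n) :=
  {v | ∃ (xs vs : ℕ → En n) (ws : ℕ → En n × En n),
    (∀ k, vs k ∈ LSubdiff f (xs k)) ∧ Tendsto xs atTop (𝓝 x) ∧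
    Tendsto (fun k => f (xs k)) atTop (𝓝 (f x)) ∧ Tendsto vs atTop (𝓝 xstar) ∧
    (∀ k, ws k ∈ AttRegNormal f (xs k) (vs k)) ∧ Tendsto ws atTop (𝓝 v)}

open ContinuousLinearMap

lemma Filter.Tendsto.ereal_add_coe {α : Type*} {l : Filter α} {F : α → EReal} {r : α → ℝ}
    {a : EReal} {b : ℝ} (hF : Tendsto F l (𝓝 a)) (hr : Tendsto r l (𝓝 b)) :
    Tendsto (fun k => F k + (r k : EReal)) l (𝓝 (a + b)) :=
  (EReal.continuousAt_add (.inr (EReal.coe_ne_bot b)) (.inr (EReal.coe_ne_top b))).tendsto.comp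
    (hF.prodMk_nhds ((continuous_coe_real_ereal.tendsto b).comp hr))

section Gradient

variable {F : Type*} [NormedAddCommGroup F] [InnerProductSpace ℝ F] [CompleteSpace F]
  {g : F → ℝ}

lemma gradient_fun_neg (g : F → ℝ) : gradient (fun y => -g y) = fun y => -gradient g y := by
  funext x
  simp only [gradient, fderiv_fun_neg, map_neg]

lemma fderiv_gradient_fun_neg (g : F → ℝ) (x : F) :
    fderiv ℝ (gradient fun y => -g y) x = -fderiv ℝ (gradient g) x := by
  rw [gradient_fun_neg, fderiv_fun_neg]

lemma contDiff_gradient {m k : WithTop ℕ∞} (hg : ContDiff ℝ k g) (hmk : m + 1 ≤ k) :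
    ContDiff ℝ m (gradient g) :=
  (InnerProductSpace.toDual ℝ F).symm.contDiff.comp (hg.fderiv_right hmk)

lemma ContDiff.continuous_gradient (hg : ContDiff ℝ 1 g) : Continuous (gradient g) :=
  (contDiff_gradient (m := 0) hg (by norm_num)).continuous

lemma ContDiff.hasFDerivAt_gradient (hg : ContDiff ℝ 2 g) (x : F) :
    HasFDerivAt (gradient g) (fderiv ℝ (gradient g) x) x :=
  ((contDiff_gradient (m := 1) hg (by norm_num)).differentiable one_ne_zero x).hasFDerivAt

lemma ContDiff.continuous_adjoint_fderiv_gradient_apply (hg : ContDiff ℝ 2 g) :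
    Continuous fun p : F × F => adjoint (fderiv ℝ (gradient g) p.1) p.2 :=
  have hH := (contDiff_gradient (m := 1) hg (by norm_num)).continuous_fderiv one_ne_zero
  isBoundedBilinearMap_apply.continuous.comp
    (((adjoint.continuous.comp hH).comp continuous_fst).prodMk continuous_snd)

end Gradient

section SmoothPerturbation

variable {f : En n → EReal} {g : En n → ℝ}

lemma add_coe_add_coe_neg_eq_self (f : En n → EReal) (g : En n → ℝ) :
    (fun y => f y + (g y : EReal) + ((-g y : ℝ) : EReal)) = f :=
  funext fun y => by rw [EReal.coe_neg, ← sub_eq_add_neg, EReal.add_sub_cancel_right]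

lemma add_gradient_mem_fsubdiff {x v : En n} (hv : v ∈ FSubdiff f x)
    (hg : DifferentiableAt ℝ g x) :
    v + gradient g x ∈ FSubdiff (fun y => f y + (g y : EReal)) x := by
  intro c hc
  obtain ⟨δ₁, hδ₁, hf⟩ := hv (c / 2) (half_pos hc)
  obtain ⟨δ₂, hδ₂, hlin⟩ := Metric.eventually_nhds_iff_ball.mp
    ((hasGradientAt_iff_isLittleO.mp hg.hasGradientAt).def (half_pos hc))
  refine ⟨min δ₁ δ₂, lt_min hδ₁ hδ₂, fun y hy => ?_⟩
  have hgy : g x + (⟪gradient g x, y - x⟫ - c / 2 * ‖y - x‖) ≤ g y := by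
    have := (abs_le.mp (hlin y (ball_subset_ball (min_le_right _ _) hy))).1
    linarith
  have hsplit : ⟪v + gradient g x, y - x⟫ - c * ‖y - x‖
      = (⟪v, y - x⟫ - c / 2 * ‖y - x‖) + (⟪gradient g x, y - x⟫ - c / 2 * ‖y - x‖) := by
    rw [inner_add_left]; ring
  calc f x + (g x : EReal) + ((⟪v + gradient g x, y - x⟫ - c * ‖y - x‖ : ℝ) : EReal)
      = (f x + ((⟪v, y - x⟫ - c / 2 * ‖y - x‖ : ℝ) : EReal))
        + ((g x + (⟪gradient g x, y - x⟫ - c / 2 * ‖y - x‖) : ℝ) : EReal) := by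
        rw [hsplit, EReal.coe_add, EReal.coe_add, add_add_add_comm]
    _ ≤ f y + (g y : EReal) :=
        add_le_add (hf y (ball_subset_ball (min_le_left _ _) hy)) (EReal.coe_le_coe_iff.mpr hgy)

lemma add_gradient_mem_lsubdiff {x v : En n} (hv : v ∈ LSubdiff f x) (hg : ContDiff ℝ 1 g) :
    v + gradient g x ∈ LSubdiff (fun y => f y + (g y : EReal)) x := by
  obtain ⟨xs, vs, hmem, hxs, hfxs, hvs⟩ := hv
  exact ⟨xs, fun k => vs k + gradient g (xs k),
    fun k => add_gradient_mem_fsubdiff (hmem k) (hg.differentiable one_ne_zero _), hxs,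
    hfxs.ereal_add_coe ((hg.continuous.tendsto x).comp hxs),
    hvs.add ((hg.continuous_gradient.tendsto x).comp hxs)⟩

lemma mem_attTangent_add_gradient {x v : En n} {u : En n × En n} (hu : u ∈ AttTangent f x v)
    (hg : ContDiff ℝ 2 g) :
    (u.1, fderiv ℝ (gradient g) x u.1 + u.2) ∈
      AttTangent (fun y => f y + (g y : EReal)) x (v + gradient g x) := by
  obtain ⟨t, xs, vs, ht, ht0, hmem, hxs, hfxs, hvs, hquot⟩ := hu
  have hx : Tendsto (fun k => (t k)⁻¹ • (xs k - x)) atTop (𝓝 u.1) := by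
    simpa [Function.comp_def] using (continuous_fst.tendsto u).comp hquot
  have hv : Tendsto (fun k => (t k)⁻¹ • (vs k - v)) atTop (𝓝 u.2) := by
    simpa [Function.comp_def] using (continuous_snd.tendsto u).comp hquot
  have hG : Tendsto (fun k => (t k)⁻¹ • (gradient g (xs k) - gradient g x)) atTop
      (𝓝 (fderiv ℝ (gradient g) x u.1)) := by
    simpa using (hg.hasFDerivAt_gradient x).hasFDerivWithinAt.lim (s := Set.univ)
      (tendsto_sub_nhds_zero_iff.mpr hxs) (.of_forall fun _ => Set.mem_univ _) hx
  refine ⟨t, xs, fun k => vs k + gradient g (xs k), ht, ht0,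
    fun k => add_gradient_mem_lsubdiff (hmem k) (hg.of_le one_le_two), hxs,
    hfxs.ereal_add_coe ((hg.continuous.tendsto x).comp hxs),
    hvs.add (((hg.of_le one_le_two).continuous_gradient.tendsto x).comp hxs), ?_⟩
  refine (hx.prodMk_nhds (hG.add hv)).congr fun k => ?_
  simp only [Prod.mk_sub_mk, Prod.smul_mk, ← smul_add]
  congr 2
  abel

lemma mem_attTangent_of_add_gradient {x v : En n} {u : En n × En n}
    (hu : u ∈ AttTangent (fun y => f y + (g y : EReal)) x (v + gradient g x))
    (hg : ContDiff ℝ 2 g) :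
    (u.1, -fderiv ℝ (gradient g) x u.1 + u.2) ∈ AttTangent f x v := by
  have := mem_attTangent_add_gradient hu hg.neg
  rwa [add_coe_add_coe_neg_eq_self, fderiv_gradient_fun_neg, gradient_fun_neg,
    add_neg_cancel_right] at this

lemma mem_attRegNormal_add_gradient {x v : En n} {w : En n × En n}
    (hw : w ∈ AttRegNormal f x v) (hg : ContDiff ℝ 2 g) :
    (w.1 - adjoint (fderiv ℝ (gradient g) x) w.2, w.2) ∈
      AttRegNormal (fun y => f y + (g y : EReal)) x (v + gradient g x) := by
  intro u hu
  have := hw _ (mem_attTangent_of_add_gradient hu hg)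
  simp only [inner_sub_left, inner_add_right, inner_neg_right, adjoint_inner_left] at this ⊢
  linarith

lemma mem_attLimNormal_add_gradient {x v : En n} {w : En n × En n}
    (hw : w ∈ AttLimNormal f x v) (hg : ContDiff ℝ 2 g) :
    (w.1 - adjoint (fderiv ℝ (gradient g) x) w.2, w.2) ∈
      AttLimNormal (fun y => f y + (g y : EReal)) x (v + gradient g x) := by
  obtain ⟨xs, vs, ws, hmem, hxs, hfxs, hvs, hws, hwt⟩ := hw
  have hsnd : Tendsto (fun k => (ws k).2) atTop (𝓝 w.2) := (continuous_snd.tendsto w).comp hwt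
  refine ⟨xs, fun k => vs k + gradient g (xs k),
    fun k => ((ws k).1 - adjoint (fderiv ℝ (gradient g) (xs k)) (ws k).2, (ws k).2),
    fun k => add_gradient_mem_lsubdiff (hmem k) (hg.of_le one_le_two), hxs,
    hfxs.ereal_add_coe ((hg.continuous.tendsto x).comp hxs),
    hvs.add (((hg.of_le one_le_two).continuous_gradient.tendsto x).comp hxs),
    fun k => mem_attRegNormal_add_gradient (hws k) hg, ?_⟩
  exact ((((continuous_fst.tendsto w).comp hwt).sub
    ((hg.continuous_adjoint_fderiv_gradient_apply.tendsto (x, w.2)).comp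
      (hxs.prodMk_nhds hsnd))).prodMk_nhds hsnd)

end SmoothPerturbation

theorem stmt6_general (f : En n → EReal) (xb xbs : En n)
    (g : En n → ℝ) (hg : ContDiff ℝ 2 g) :
    AttLimNormal (fun x => f x + ((g x : ℝ) : EReal)) xb (xbs + gradient g xb)
      = (fun w : En n × En n =>
          (w.1 - ContinuousLinearMap.adjoint (fderiv ℝ (gradient g) xb) w.2, w.2)) ''
          AttLimNormal f xb xbs := by
  ext w
  constructor
  · intro hw
    have := mem_attLimNormal_add_gradient hw hg.neg
    rw [add_coe_add_coe_neg_eq_self, fderiv_gradient_fun_neg, gradient_fun_neg,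
      add_neg_cancel_right] at this
    exact ⟨_, this, by simp⟩
  · rintro ⟨w, hw, rfl⟩
    exact mem_attLimNormal_add_gradient hw hg

theorem stmt6 (f : En n → EReal) (xb xbs : En n) (hx : xbs ∈ LSubdiff f xb)
    (g : En n → ℝ) (hg : ContDiff ℝ 2 g) :
    AttLimNormal (fun x => f x + ((g x : ℝ) : EReal)) xb (xbs + gradient g xb)
      = (fun w : En n × En n =>
          (w.1 - ContinuousLinearMap.adjoint (fderiv ℝ (gradient g) xb) w.2, w.2)) ''
          AttLimNormal f xb xbs :=
  stmt6_general f xb xbs g hg
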